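/- Fix h : ℕ, k ≥ 1, and intervals x_1, …, x_k with x_j = {m ∈ ℕ : a_j ≤ m < b_j} where a_j < b_j ≤ 2^h. Then ⋂_{j ∈ [k]} x_j ≠ ∅ if and only if there exists i ∈ [k] such that for every j ∈ [k] there exists a bitstring u_j ∈ CP_h(a_j, b_j) with a_i ∈ seg_h(u_j). -/

import Mathlib

/-- The value of a bitstring (most significant bit first):
`val [] = 0` and `val (u ++ [b]) = 2 * val u + (if b then 1 else 0)`. -/
def bitVal (u : List Bool) : ℕ :=
  u.foldl (fun n b => 2 * n + (if b then 1 else 0)) 0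

/-- The segment of a bitstring `u` (with `|u| ≤ h`) in the perfect segment tree of
height `h`: `seg_h(u) = {m : val u · 2^(h−|u|) ≤ m < (val u + 1) · 2^(h−|u|)}`. -/
def seg (h : ℕ) (u : List Bool) : Set ℕ :=
  {m | bitVal u * 2 ^ (h - u.length) ≤ m ∧ m < (bitVal u + 1) * 2 ^ (h - u.length)}

/-- The canonical partition `CP_h(a, b)` of the interval `{m : a ≤ m < b}` in the
perfect segment tree of height `h`: the bitstrings `u` with `|u| ≤ h` whose segment is
contained in `[a, b)` and such that no proper prefix of `u` has its segment contained
in `[a, b)`. -/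
def CP (h a b : ℕ) : Set (List Bool) :=
  {u | u.length ≤ h ∧ seg h u ⊆ Set.Ico a b ∧
    ∀ u' : List Bool, u' <+: u → u' ≠ u → ¬ seg h u' ⊆ Set.Ico a b}

/-!
If some point lies in every interval, then so does the largest left endpoint `a i`. Every
point `m` of `[a, b)` lies in a segment of `CP_h(a, b)`: among the nodes whose segment
contains `m` and fits inside `[a, b)` (the leaf of `m` is one) take a shortest one; its
proper prefixes also contain `m`, so by minimality none of them fits. Conversely, `a i`
lying in a segment of `CP_h(a j, b j)` puts it in `[a j, b j)` for every `j`.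
-/

lemma foldl_bit_eq_mul_add_bitVal (t : List Bool) (n : ℕ) :
    t.foldl (fun n b => 2 * n + (if b then 1 else 0)) n = n * 2 ^ t.length + bitVal t := by
  induction t generalizing n with
  | nil => simp [bitVal]
  | cons b t ih =>
    rw [List.foldl_cons, ih, List.length_cons]
    conv_rhs => rw [bitVal, List.foldl_cons, ih]
    cases b <;> simp <;> ring

lemma bitVal_append (u t : List Bool) :
    bitVal (u ++ t) = bitVal u * 2 ^ t.length + bitVal t := by
  rw [bitVal, List.foldl_append, foldl_bit_eq_mul_add_bitVal]
  rfl

lemma bitVal_lt_two_pow (t : List Bool) : bitVal t < 2 ^ t.length := by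
  induction t with
  | nil => simp [bitVal]
  | cons b t ih =>
    have hb : bitVal [b] ≤ 1 := by cases b <;> simp [bitVal]
    rw [← List.singleton_append, bitVal_append, List.length_append, List.length_singleton,
      pow_add, pow_one]
    nlinarith

lemma exists_length_eq_bitVal_eq {h m : ℕ} (hm : m < 2 ^ h) :
    ∃ u : List Bool, u.length = h ∧ bitVal u = m := by
  induction h generalizing m with
  | zero => exact ⟨[], rfl, by simp_all [bitVal]⟩
  | succ h ih =>
    obtain ⟨u, hlen, hval⟩ := ih (m := m / 2) (by omega)
    refine ⟨u ++ [decide (m % 2 = 1)], by simp [hlen], ?_⟩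
    have hbit : bitVal [decide (m % 2 = 1)] = m % 2 := by
      rcases Nat.mod_two_eq_zero_or_one m with h2 | h2 <;> simp [bitVal, h2]
    rw [bitVal_append, hbit, hval, List.length_singleton, pow_one]
    omega

lemma seg_eq_singleton {h : ℕ} {u : List Bool} (hu : u.length = h) :
    seg h u = {bitVal u} := by
  ext m
  simp [seg, hu]
  omega

lemma seg_subset_seg_of_prefix {h : ℕ} {u' u : List Bool} (hp : u' <+: u)
    (hu : u.length ≤ h) : seg h u ⊆ seg h u' := by
  obtain ⟨t, rfl⟩ := hp
  rw [List.length_append] at hu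
  have hsplit : 2 ^ (h - u'.length) = 2 ^ t.length * 2 ^ (h - (u' ++ t).length) := by
    rw [← pow_add, List.length_append]
    congr 1
    omega
  have ht := bitVal_lt_two_pow t
  simp only [seg, bitVal_append, hsplit]
  intro m ⟨hlo, hhi⟩
  constructor
  · calc bitVal u' * (2 ^ t.length * 2 ^ (h - (u' ++ t).length))
        ≤ (bitVal u' * 2 ^ t.length + bitVal t) * 2 ^ (h - (u' ++ t).length) := by
          rw [← mul_assoc]; gcongr; omega
      _ ≤ m := hlo
  · calc m < (bitVal u' * 2 ^ t.length + bitVal t + 1) * 2 ^ (h - (u' ++ t).length) := hhi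
      _ ≤ (bitVal u' + 1) * (2 ^ t.length * 2 ^ (h - (u' ++ t).length)) := by
          rw [← mul_assoc]; gcongr; rw [add_mul, one_mul]; omega

lemma exists_mem_CP_of_mem_Ico {h a b m : ℕ} (hm : m ∈ Set.Ico a b) (hb : b ≤ 2 ^ h) :
    ∃ u ∈ CP h a b, m ∈ seg h u := by
  classical
  have hfits : ∃ n, ∃ u : List Bool, u.length = n ∧ n ≤ h ∧ m ∈ seg h u ∧
      seg h u ⊆ Set.Ico a b := by
    obtain ⟨u, hlen, hval⟩ := exists_length_eq_bitVal_eq (hm.2.trans_le hb)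
    refine ⟨h, u, hlen, le_rfl, ?_, ?_⟩ <;> simp [seg_eq_singleton hlen, hval, hm.1, hm.2]
  obtain ⟨u, hlen, hle, hmem, hsub⟩ := Nat.find_spec hfits
  refine ⟨u, ⟨hlen ▸ hle, hsub, fun u' hp hne hsub' => ?_⟩, hmem⟩
  have hlt : u'.length < u.length :=
    hp.length_le.lt_of_ne fun heq => hne (hp.eq_of_length heq)
  exact Nat.find_min hfits (hlen ▸ hlt)
    ⟨u', rfl, by omega, seg_subset_seg_of_prefix hp (hlen ▸ hle) hmem, hsub'⟩

theorem intersection_nonempty_iff_canonical_nodes_general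
    (h k : ℕ) (hk : 1 ≤ k) (a b : Fin k → ℕ)
    (hb : ∀ j, b j ≤ 2 ^ h) :
    (⋂ j, Set.Ico (a j) (b j)).Nonempty ↔
      ∃ i : Fin k, ∀ j : Fin k, ∃ u ∈ CP h (a j) (b j), a i ∈ seg h u := by
  constructor
  · rintro ⟨m, hm⟩
    rw [Set.mem_iInter] at hm
    have : Nonempty (Fin k) := ⟨⟨0, hk⟩⟩
    obtain ⟨i, hi⟩ := Finite.exists_max a
    exact ⟨i, fun j => exists_mem_CP_of_mem_Ico ⟨hi j, (hm i).1.trans_lt (hm j).2⟩ (hb j)⟩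
  · rintro ⟨i, hi⟩
    refine ⟨a i, Set.mem_iInter.2 fun j => ?_⟩
    obtain ⟨u, hu, hmem⟩ := hi j
    exact hu.2.1 hmem

/-- (Intersection Predicate Rewriting 1, dyadic form.) Fix `h`,
`k ≥ 1`, and intervals `x j = {m : a j ≤ m < b j}` with `a j < b j ≤ 2^h`. Then
`⋂ j, x j ≠ ∅` iff there is an index `i` such that for every `j` some bitstring
`u ∈ CP_h(a j, b j)` has `a i ∈ seg_h(u)`. -/
theorem intersection_nonempty_iff_canonical_nodes
    (h k : ℕ) (hk : 1 ≤ k) (a b : Fin k → ℕ)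
    (hab : ∀ j, a j < b j) (hb : ∀ j, b j ≤ 2 ^ h) :
    (⋂ j, Set.Ico (a j) (b j)).Nonempty ↔
      ∃ i : Fin k, ∀ j : Fin k, ∃ u ∈ CP h (a j) (b j), a i ∈ seg h u :=
  intersection_nonempty_iff_canonical_nodes_general h k hk a b hb
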